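/- Let μ be any Borel probability measure on ℝ with cdf G, let λ ≠ 0, and let μ_λ be the unique Borel probability measure with cdf x ↦ F_λ(G(x)). Then for every Borel set A, m_λ · μ(A) ≤ μ_λ(A) ≤ M_λ · μ(A), where m_λ = min(λ/(1 − e^{−λ}), λ/(e^λ − 1)) and M_λ = max(λ/(1 − e^{−λ}), λ/(e^λ − 1)). In particular μ_λ and μ are mutually absolutely continuous, so μ and μ_λ have the same null sets (and hence the same support). -/

import Mathlib

/-!
On `[0, 1]` the derivative `λ e^{-λu} / (1 - e^{-λ})` of `F_λ` lies between its endpoint values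
`λ / (1 - e^{-λ})` and `λ / (e^λ - 1)`, so by the mean value theorem the increments of `F_λ ∘ G`
are squeezed between `m_λ` and `M_λ` times those of `G`. Hence `F_λ ∘ G - m_λ G` and
`M_λ G - F_λ ∘ G` are again Stieltjes functions, and their measures are the nonnegative measures
`μ_λ - m_λ μ` and `M_λ μ - μ_λ`.
-/

open Real Set MeasureTheory ProbabilityTheory
open scoped NNReal

namespace StieltjesFunction

variable {R : Type*} [LinearOrder R] [TopologicalSpace R] [OrderTopology R] [CompactIccSpace R]
  [MeasurableSpace R] [BorelSpace R] [SecondCountableTopology R] [DenselyOrdered R]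

lemma measure_le_of_monotone_sub {f g : StieltjesFunction R} (h : Monotone fun x => g x - f x) :
    f.measure ≤ g.measure := by
  let d : StieltjesFunction R :=
    { toFun := fun x => g x - f x
      mono' := h
      right_continuous' := fun x => (g.right_continuous x).sub (f.right_continuous x) }
  have hg : g = f + d := ext fun x => by simp [d]
  rw [hg, measure_add]
  exact Measure.le_add_right le_rfl

end StieltjesFunction

namespace ProbabilityTheory

variable {μ ν : Measure ℝ} [IsProbabilityMeasure μ] [IsProbabilityMeasure ν]

lemma smul_le_of_monotone_cdf_sub_smul {c : ℝ≥0} (h : Monotone fun x => cdf ν x - c * cdf μ x) :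
    c • μ ≤ ν := by
  simpa [measure_cdf] using (c • cdf μ).measure_le_of_monotone_sub (g := cdf ν) h

lemma le_smul_of_monotone_smul_cdf_sub {c : ℝ≥0} (h : Monotone fun x => c * cdf μ x - cdf ν x) :
    ν ≤ c • μ := by
  simpa [measure_cdf] using (cdf ν).measure_le_of_monotone_sub (g := c • cdf μ) h

end ProbabilityTheory

noncomputable def truncExpCDF (l u : ℝ) : ℝ := (1 - exp (-(l * u))) / (1 - exp (-l))

lemma hasDerivAt_truncExpCDF (l u : ℝ) :
    HasDerivAt (truncExpCDF l) (l / (1 - exp (-l)) * exp (-(l * u))) u := by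
  have hlin : HasDerivAt (fun u => -(l * u)) (-l) u := by
    simpa using ((hasDerivAt_id u).const_mul l).fun_neg
  exact ((hlin.exp.const_sub 1).div_const (1 - exp (-l))).congr_deriv (by ring)

lemma differentiable_truncExpCDF (l : ℝ) : Differentiable ℝ (truncExpCDF l) := fun u =>
  (hasDerivAt_truncExpCDF l u).differentiableAt

lemma div_one_sub_exp_neg_nonneg (l : ℝ) : 0 ≤ l / (1 - exp (-l)) := by
  rcases le_total 0 l with h | h
  · exact div_nonneg h (sub_nonneg.2 (exp_le_one_iff.2 (by linarith)))
  · exact div_nonneg_of_nonpos h (sub_nonpos.2 (one_le_exp_iff.2 (by linarith)))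

lemma div_one_sub_exp_neg_pos {l : ℝ} (hl : l ≠ 0) : 0 < l / (1 - exp (-l)) :=
  (div_one_sub_exp_neg_nonneg l).lt_of_ne' <|
    div_ne_zero hl (sub_ne_zero.2 fun h => hl (by simpa using h.symm))

lemma div_exp_sub_one_eq (l : ℝ) : l / (exp l - 1) = l / (1 - exp (-l)) * exp (-l) := by
  rw [show exp l - 1 = (1 - exp (-l)) * exp l by rw [sub_mul, ← exp_add]; simp, ← div_div,
    div_eq_mul_inv _ (exp l), exp_neg]

lemma neg_mul_mem_uIcc {l u : ℝ} (hu : u ∈ Icc 0 1) : -(l * u) ∈ uIcc 0 (-l) := by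
  rw [← segment_eq_uIcc]
  exact ⟨1 - u, u, by linarith [hu.2], hu.1, by ring, by simp; ring⟩

lemma deriv_truncExpCDF_mem_uIcc (l : ℝ) {u : ℝ} (hu : u ∈ Icc 0 1) :
    l / (1 - exp (-l)) * exp (-(l * u)) ∈ uIcc (l / (1 - exp (-l))) (l / (exp l - 1)) := by
  have hmono : Monotone fun t => l / (1 - exp (-l)) * exp t := fun _ _ h =>
    mul_le_mul_of_nonneg_left (exp_le_exp.2 h) (div_one_sub_exp_neg_nonneg l)
  simpa [div_exp_sub_one_eq] using hmono.mapsTo_uIcc (neg_mul_mem_uIcc hu)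

lemma truncExpCDF_sub_le_max_mul (l : ℝ) {u v : ℝ} (hv : 0 ≤ v) (hvu : v ≤ u) (hu : u ≤ 1) :
    truncExpCDF l u - truncExpCDF l v ≤ max (l / (1 - exp (-l))) (l / (exp l - 1)) * (u - v) := by
  have hdiff := differentiable_truncExpCDF l
  refine (convex_Icc 0 1).image_sub_le_mul_sub_of_deriv_le hdiff.continuous.continuousOn
    hdiff.differentiableOn (fun x hx => ?_) v ⟨hv, hvu.trans hu⟩ u ⟨hv.trans hvu, hu⟩ hvu
  rw [(hasDerivAt_truncExpCDF l x).deriv]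
  exact (deriv_truncExpCDF_mem_uIcc l (interior_subset hx)).2

lemma min_mul_sub_le_truncExpCDF_sub (l : ℝ) {u v : ℝ} (hv : 0 ≤ v) (hvu : v ≤ u) (hu : u ≤ 1) :
    min (l / (1 - exp (-l))) (l / (exp l - 1)) * (u - v) ≤ truncExpCDF l u - truncExpCDF l v := by
  have hdiff := differentiable_truncExpCDF l
  refine (convex_Icc 0 1).mul_sub_le_image_sub_of_le_deriv hdiff.continuous.continuousOn
    hdiff.differentiableOn (fun x hx => ?_) v ⟨hv, hvu.trans hu⟩ u ⟨hv.trans hvu, hu⟩ hvu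
  rw [(hasDerivAt_truncExpCDF l x).deriv]
  exact (deriv_truncExpCDF_mem_uIcc l (interior_subset hx)).1

/-- Let `μ` be a Borel probability measure on `ℝ` with cdf `G`, `λ ≠ 0`,
and let `μ_λ` be the probability measure with cdf `x ↦ F_λ(G(x))`. Then for every Borel
set `A`, `m_λ · μ(A) ≤ μ_λ(A) ≤ M_λ · μ(A)` where
`m_λ = min(λ/(1 − e^{−λ}), λ/(e^λ − 1))` and `M_λ = max(λ/(1 − e^{−λ}), λ/(e^λ − 1))`;
in particular `μ_λ` and `μ` are mutually absolutely continuous. -/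
theorem expG_measure_equivalent
    (μ μl : Measure ℝ) [IsProbabilityMeasure μ] [IsProbabilityMeasure μl]
    (G : ℝ → ℝ) (hG : ∀ x, G x = (μ (Iic x)).toReal)
    (l : ℝ) (hl : l ≠ 0)
    (hμl : ∀ x, (μl (Iic x)).toReal
      = (1 - Real.exp (-(l * G x))) / (1 - Real.exp (-l))) :
    (∀ A : Set ℝ, MeasurableSet A →
      ENNReal.ofReal (min (l / (1 - Real.exp (-l))) (l / (Real.exp l - 1))) * μ A ≤ μl A ∧
      μl A ≤ ENNReal.ofReal (max (l / (1 - Real.exp (-l))) (l / (Real.exp l - 1))) * μ A) ∧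
    μl ≪ μ ∧ μ ≪ μl := by
  set m := min (l / (1 - exp (-l))) (l / (exp l - 1))
  set M := max (l / (1 - exp (-l))) (l / (exp l - 1))
  have hcdf : ∀ x, cdf μl x = truncExpCDF l (cdf μ x) := fun x => by
    rw [cdf_eq_real, cdf_eq_real, measureReal_def, measureReal_def, hμl, hG]
    rfl
  have hm : 0 < m := by
    have hc := div_one_sub_exp_neg_pos hl
    exact lt_min hc (div_exp_sub_one_eq l ▸ mul_pos hc (exp_pos _))
  have hM : 0 ≤ M := hm.le.trans min_le_max
  have hlow : m.toNNReal • μ ≤ μl := smul_le_of_monotone_cdf_sub_smul fun x y hxy => by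
    have := min_mul_sub_le_truncExpCDF_sub l (cdf_nonneg μ x) (monotone_cdf μ hxy) (cdf_le_one μ y)
    simp only [hcdf, Real.coe_toNNReal _ hm.le]
    linarith
  have hup : μl ≤ M.toNNReal • μ := le_smul_of_monotone_smul_cdf_sub fun x y hxy => by
    have := truncExpCDF_sub_le_max_mul l (cdf_nonneg μ x) (monotone_cdf μ hxy) (cdf_le_one μ y)
    simp only [hcdf, Real.coe_toNNReal _ hM]
    linarith
  refine ⟨fun A _ => ⟨hlow A, hup A⟩, ?_, ?_⟩
  · exact (Measure.absolutelyContinuous_of_le hup).trans (.smul_left .rfl _)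
  · exact (Measure.absolutelyContinuous_smul (by simpa using hm)).trans
      (Measure.absolutelyContinuous_of_le hlow)
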